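/- Let (X, μ) be a probability space, G a topological group with identity e equipped with a metric d, H a complex Hilbert space, n a positive natural number, δ, ε > 0, ξ : Fin n → H a family of vectors, and ρ : G → (H →L[ℂ] H) a map. Assume: (i) for every h ∈ G, if ‖(ρ h)(ξ i) − ξ i‖ < δ for all i, then d(h, e) < ε; (ii) f : X → G is measurable with x ↦ (ρ (f x))(ξ i) measurable for each i, and for every i, ∫ ‖(ρ (f x))(ξ i) − ξ i‖² dμ(x) < δ² · ε / n. Then μ{x ∈ X : d(f x, e) ≥ ε} < ε, and consequently me₁(f, (fun _ => e)) ≤ ε. -/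

import Mathlib

open MeasureTheory
open scoped ENNReal

/-- Gromov's metric `me₁(f, g) = inf {ε > 0 : μ {x : d(f x, g x) > ε} < ε}` on maps `X → G`. -/
noncomputable def me1 {X : Type*} [MeasurableSpace X] (μ : Measure X)
    {G : Type*} [PseudoMetricSpace G] (f g : X → G) : ℝ :=
  sInf {ε : ℝ | 0 < ε ∧ μ {x : X | ε < dist (f x) (g x)} < ENNReal.ofReal ε}

/-!
By hypothesis (i), every `x` with `ε ≤ d(f x, e)` has `δ ≤ ‖ρ (f x) (ξ i) - ξ i‖` for some
`i`. Chebyshev's inequality for `‖ρ (f x) (ξ i) - ξ i‖²` gives each of these `n` sets measure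
strictly below `ε / n`, so their union has measure `< ε`, which is what membership of `ε` in
the set defining `me₁(f, e)` asks for.
-/

section Chebyshev

variable {α : Type*} [MeasurableSpace α] {μ : Measure α} [IsFiniteMeasure μ]

theorem measure_le_lt_ofReal_of_integral_lt {f : α → ℝ} (hf_nonneg : 0 ≤ᵐ[μ] f)
    (hf_int : Integrable f μ) {t c : ℝ} (ht : 0 < t) (h : ∫ x, f x ∂μ < t * c) :
    μ {x | t ≤ f x} < ENNReal.ofReal c := by
  have hreal : μ.real {x | t ≤ f x} < c :=
    lt_of_mul_lt_mul_left ((mul_meas_ge_le_integral_of_nonneg hf_nonneg hf_int t).trans_lt h)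
      ht.le
  exact (ENNReal.lt_ofReal_iff_toReal_lt (measure_ne_top μ _)).2 hreal

theorem measure_le_norm_lt_ofReal_of_integral_sq_lt {E : Type*} [NormedAddCommGroup E]
    {g : α → E} (hint : Integrable (fun x => ‖g x‖ ^ 2) μ) {δ c : ℝ} (hδ : 0 < δ)
    (h : ∫ x, ‖g x‖ ^ 2 ∂μ < δ ^ 2 * c) :
    μ {x | δ ≤ ‖g x‖} < ENNReal.ofReal c := by
  have hset : {x | δ ≤ ‖g x‖} = {x | δ ^ 2 ≤ ‖g x‖ ^ 2} := by
    ext x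
    exact (pow_le_pow_iff_left₀ hδ.le (norm_nonneg _) two_ne_zero).symm
  rw [hset]
  exact measure_le_lt_ofReal_of_integral_lt (.of_forall fun x => sq_nonneg _) hint
    (pow_pos hδ 2) h

end Chebyshev

theorem measure_iUnion_lt_ofReal_of_forall_lt_div {α ι : Type*} [MeasurableSpace α]
    {μ : Measure α} [Fintype ι] {s : ι → Set α} {ε : ℝ} (hε : 0 < ε)
    (h : ∀ i, μ (s i) < ENNReal.ofReal (ε / Fintype.card ι)) :
    μ (⋃ i, s i) < ENNReal.ofReal ε := by
  cases isEmpty_or_nonempty ι with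
  | inl _ => simpa using hε
  | inr _ =>
    calc μ (⋃ i, s i) ≤ ∑ i, μ (s i) := measure_iUnion_fintype_le μ s
      _ < ∑ _i : ι, ENNReal.ofReal (ε / Fintype.card ι) :=
          ENNReal.sum_lt_sum_of_nonempty Finset.univ_nonempty fun i _ => h i
      _ = ENNReal.ofReal ε := by
          rw [Finset.sum_const, Finset.card_univ, nsmul_eq_mul, ← ENNReal.ofReal_natCast,
            ← ENNReal.ofReal_mul (Nat.cast_nonneg _)]
          congr 1
          field_simp

theorem me1_le_of_measure_le_dist_lt {X : Type*} [MeasurableSpace X] {μ : Measure X}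
    {G : Type*} [PseudoMetricSpace G] {f g : X → G} {ε : ℝ} (hε : 0 < ε)
    (h : μ {x | ε ≤ dist (f x) (g x)} < ENNReal.ofReal ε) :
    me1 μ f g ≤ ε :=
  csInf_le ⟨0, fun _ hη => hη.1.le⟩
    ⟨hε, (measure_mono fun _ (hx : ε < _) => hx.le).trans_lt h⟩

theorem measure_dist_ge_lt_and_me1_le_general
    {X : Type*} [MeasurableSpace X] (μ : Measure X) [IsProbabilityMeasure μ]
    {G : Type*} [Group G] [MetricSpace G]
    {H : Type*} [NormedAddCommGroup H] [InnerProductSpace ℂ H]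
    (n : ℕ) (δ ε : ℝ) (hδ : 0 < δ) (hε : 0 < ε)
    (ξ : Fin n → H) (ρ : G → (H →L[ℂ] H))
    (hemb : ∀ h : G, (∀ i, ‖ρ h (ξ i) - ξ i‖ < δ) → dist h 1 < ε)
    (f : X → G)
    (hint : ∀ i, Integrable (fun x => ‖ρ (f x) (ξ i) - ξ i‖ ^ 2) μ)
    (hsmall : ∀ i, ∫ x, ‖ρ (f x) (ξ i) - ξ i‖ ^ 2 ∂μ < δ ^ 2 * ε / n) :
    μ {x : X | ε ≤ dist (f x) 1} < ENNReal.ofReal ε ∧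
      me1 μ f (fun _ => (1 : G)) ≤ ε := by
  have hcover : {x : X | ε ≤ dist (f x) 1} ⊆ ⋃ i, {x | δ ≤ ‖ρ (f x) (ξ i) - ξ i‖} := by
    intro x hx
    by_contra hx'
    simp only [Set.mem_iUnion, Set.mem_ofPred_eq, not_exists, not_le] at hx'
    exact (hemb (f x) hx').not_ge hx
  have hbad : ∀ i, μ {x | δ ≤ ‖ρ (f x) (ξ i) - ξ i‖} <
      ENNReal.ofReal (ε / Fintype.card (Fin n)) :=
    fun i => measure_le_norm_lt_ofReal_of_integral_sq_lt (hint i) hδ <| by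
      simpa only [Fintype.card_fin, mul_div_assoc] using hsmall i
  have hmain : μ {x : X | ε ≤ dist (f x) 1} < ENNReal.ofReal ε :=
    (measure_mono hcover).trans_lt (measure_iUnion_lt_ofReal_of_forall_lt_div hε hbad)
  exact ⟨hmain, me1_le_of_measure_le_dist_lt hε hmain⟩

/-- The embedding step: if strong closeness of `ρ h` to the identity on the vectors
`ξ 1, …, ξ n` (within `δ`) forces `d(h, e) < ε`, and `f : X → G` is measurable with
`∫ ‖ρ (f x) (ξ i) - ξ i‖² dμ < δ² ε / n` for each `i`, then
`μ {x | ε ≤ d(f x, e)} < ε`, and consequently `me₁(f, e) ≤ ε`. -/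
theorem measure_dist_ge_lt_and_me1_le
    {X : Type*} [MeasurableSpace X] (μ : Measure X) [IsProbabilityMeasure μ]
    {G : Type*} [Group G] [MetricSpace G] [IsTopologicalGroup G]
    [MeasurableSpace G] [BorelSpace G]
    {H : Type*} [NormedAddCommGroup H] [InnerProductSpace ℂ H] [CompleteSpace H]
    [MeasurableSpace H] [BorelSpace H]
    (n : ℕ) (hn : 0 < n) (δ ε : ℝ) (hδ : 0 < δ) (hε : 0 < ε)
    (ξ : Fin n → H) (ρ : G → (H →L[ℂ] H))
    (hemb : ∀ h : G, (∀ i, ‖ρ h (ξ i) - ξ i‖ < δ) → dist h 1 < ε)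
    (f : X → G) (hf : Measurable f)
    (hmeas : ∀ i, Measurable (fun x => ρ (f x) (ξ i)))
    (hint : ∀ i, Integrable (fun x => ‖ρ (f x) (ξ i) - ξ i‖ ^ 2) μ)
    (hsmall : ∀ i, ∫ x, ‖ρ (f x) (ξ i) - ξ i‖ ^ 2 ∂μ < δ ^ 2 * ε / n) :
    μ {x : X | ε ≤ dist (f x) 1} < ENNReal.ofReal ε ∧
      me1 μ f (fun _ => (1 : G)) ≤ ε :=
  measure_dist_ge_lt_and_me1_le_general μ n δ ε hδ hε ξ ρ hemb f hint hsmall
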